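/- For any policy π with σ-finite occupancy measure, the occupancy measure μ_γ^π is absolutely continuous with respect to the occupancy measure μ_γ^{π̃} of its Markovian projection π̃. -/

import Mathlib

/-!
State-action occupancy equivalence, finite case.

An MDP with finite state space `S` and action space `A`, initial distribution `p0`,
transition kernel `p`, and discount factor `γ < 1`. A (possibly non-Markovian) policy
maps a finite history (the past state-action pairs) and the current state to a
distribution over actions. The occupancy `occ γ p0 p π s a` is
`E[∑ₜ γ^t 1(Sₜ = s, Aₜ = a)]`, computed by summing path probabilities over all
trajectory prefixes. The Markovian policy `π̃(a|s) = μ(s,a)/μ(s)` has the same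
occupancy as `π`.
-/

open Finset
open scoped ENNReal

/-- The history (of past state-action pairs) seen at step `i` of a trajectory
prefix `w`. -/
def hist {S A : Type*} {t : ℕ} (w : Fin (t + 1) → S × A) (i : Fin (t + 1)) :
    Fin i.1 → S × A :=
  fun j => w ⟨j.1, lt_trans j.2 i.2⟩

/-- Probability of a trajectory prefix `w = ((S₀,A₀),…,(Sₜ,Aₜ))` under initial
distribution `p0`, transition kernel `p` and history-dependent policy `π`. -/
noncomputable def pathProb {S A : Type*} [Fintype S] [Fintype A]
    (p0 : S → ℝ≥0∞) (p : S × A → S → ℝ≥0∞)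
    (π : (t : ℕ) → (Fin t → S × A) → S → A → ℝ≥0∞)
    (t : ℕ) (w : Fin (t + 1) → S × A) : ℝ≥0∞ :=
  p0 (w 0).1 * (∏ i : Fin (t + 1), π i.1 (hist w i) (w i).1 (w i).2) *
    ∏ i : Fin t, p (w i.castSucc) (w i.succ).1

/-- Discounted occupancy `μ_γ^π(s,a) = E[∑ₜ γ^t 1(Sₜ = s, Aₜ = a)]`. -/
noncomputable def occ {S A : Type*} [Fintype S] [Fintype A] [DecidableEq S] [DecidableEq A]
    (γ : ℝ≥0∞) (p0 : S → ℝ≥0∞) (p : S × A → S → ℝ≥0∞)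
    (π : (t : ℕ) → (Fin t → S × A) → S → A → ℝ≥0∞) (s : S) (a : A) : ℝ≥0∞ :=
  ∑' t : ℕ, γ ^ t * ∑ w : Fin (t + 1) → S × A,
    (if w (Fin.last t) = (s, a) then pathProb p0 p π t w else 0)

/-- A Markovian policy, viewed as a history-dependent policy ignoring the history. -/
def liftMk {S A : Type*} (πm : S → A → ℝ≥0∞) :
    (t : ℕ) → (Fin t → S × A) → S → A → ℝ≥0∞ :=
  fun _ _ s a => πm s a


section Aux
variable {S A : Type*} [Fintype S] [Fintype A] [DecidableEq S] [DecidableEq A]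

lemma hist_snoc_last {t : ℕ} (u : Fin (t + 1) → S × A) (x : S × A) :
    hist (Fin.snoc u x) (Fin.last (t + 1)) = u := by
  funext j
  exact Fin.snoc_castSucc (α := fun _ => S × A) (p := u) (x := x) (i := j)

lemma hist_snoc_castSucc {t : ℕ} (u : Fin (t + 1) → S × A) (x : S × A) (i : Fin (t + 1)) :
    hist (Fin.snoc u x) i.castSucc = hist u i := by
  funext j
  exact Fin.snoc_castSucc (α := fun _ => S × A) (p := u) (x := x) (i := ⟨j.1, lt_trans j.2 i.2⟩)

lemma pathProb_snoc (p0 : S → ℝ≥0∞) (p : S × A → S → ℝ≥0∞)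
    (π : (t : ℕ) → (Fin t → S × A) → S → A → ℝ≥0∞) (t : ℕ)
    (u : Fin (t + 1) → S × A) (x : S × A) :
    pathProb p0 p π (t + 1) (Fin.snoc u x) =
      pathProb p0 p π t u * π (t + 1) u x.1 x.2 * p (u (Fin.last t)) x.1 := by
  unfold pathProb
  rw [Fin.prod_univ_castSucc
      (f := fun i : Fin (t + 1) => p ((Fin.snoc u x : Fin (t + 1 + 1) → S × A) i.castSucc)
        ((Fin.snoc u x : Fin (t + 1 + 1) → S × A) i.succ).1),
    Fin.prod_univ_castSucc]
  have h1 : ∀ i : Fin (t + 1),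
      π (i.castSucc).1 (hist (Fin.snoc u x) i.castSucc)
        ((Fin.snoc u x : Fin (t + 2) → S × A) i.castSucc).1 ((Fin.snoc u x : Fin (t + 2) → S × A) i.castSucc).2
      = π i.1 (hist u i) (u i).1 (u i).2 := by
    intro i
    rw [Fin.snoc_castSucc, hist_snoc_castSucc]
    rfl
  have h2 : ∀ i : Fin t,
      p ((Fin.snoc u x : Fin (t + 2) → S × A) (i.castSucc).castSucc) ((Fin.snoc u x : Fin (t + 2) → S × A) (i.castSucc).succ).1
      = p (u i.castSucc) (u i.succ).1 := by
    intro i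
    rw [Fin.succ_castSucc, Fin.snoc_castSucc, Fin.snoc_castSucc]
  have h0 : (Fin.snoc u x : Fin (t + 2) → S × A) 0 = u 0 := by
    rw [show (0 : Fin (t + 2)) = (0 : Fin (t + 1)).castSucc by simp, Fin.snoc_castSucc]
  rw [Finset.prod_congr rfl (fun i _ => h1 i), Finset.prod_congr rfl (fun i _ => h2 i), h0,
    Fin.succ_last, Fin.snoc_last, hist_snoc_last, Fin.snoc_castSucc]
  show _ * (_ * π (t + 1) u x.1 x.2) * (_ * p (u (Fin.last t)) x.1) = _
  ring

end Aux

section Aux2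
variable {S A : Type*} [Fintype S] [Fintype A] [DecidableEq S] [DecidableEq A]

/-- Time-`t` state-action marginal. -/
noncomputable def tmarg (p0 : S → ℝ≥0∞) (p : S × A → S → ℝ≥0∞)
    (π : (t : ℕ) → (Fin t → S × A) → S → A → ℝ≥0∞) (t : ℕ) (s : S) (a : A) : ℝ≥0∞ :=
  ∑ w : Fin (t + 1) → S × A, (if w (Fin.last t) = (s, a) then pathProb p0 p π t w else 0)

/-- Time-`t` state marginal. -/
noncomputable def smarg (p0 : S → ℝ≥0∞) (p : S × A → S → ℝ≥0∞)
    (π : (t : ℕ) → (Fin t → S × A) → S → A → ℝ≥0∞) (t : ℕ) (s : S) : ℝ≥0∞ :=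
  ∑ a, tmarg p0 p π t s a

lemma occ_eq_tsum (γ : ℝ≥0∞) (p0 : S → ℝ≥0∞) (p : S × A → S → ℝ≥0∞)
    (π : (t : ℕ) → (Fin t → S × A) → S → A → ℝ≥0∞) (s : S) (a : A) :
    occ γ p0 p π s a = ∑' t : ℕ, γ ^ t * tmarg p0 p π t s a := rfl

lemma sum_snoc {t : ℕ} (f : (Fin (t + 2) → S × A) → ℝ≥0∞) :
    ∑ w : Fin (t + 2) → S × A, f w
      = ∑ x : S × A, ∑ u : Fin (t + 1) → S × A, f (Fin.snoc u x) := by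
  rw [← Equiv.sum_comp (Fin.snocEquiv (fun _ => S × A)) f, Fintype.sum_prod_type]
  rfl

lemma sum_fin_one (f : (Fin 1 → S × A) → ℝ≥0∞) :
    ∑ w : Fin 1 → S × A, f w = ∑ x : S × A, f (fun _ => x) := by
  rw [← Equiv.sum_comp (Equiv.funUnique (Fin 1) (S × A)).symm f]
  exact Finset.sum_congr rfl fun x _ => rfl

lemma pathProb_zero (p0 : S → ℝ≥0∞) (p : S × A → S → ℝ≥0∞)
    (π : (t : ℕ) → (Fin t → S × A) → S → A → ℝ≥0∞) (w : Fin 1 → S × A) :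
    pathProb p0 p π 0 w = p0 (w 0).1 * π 0 (fun j => j.elim0) (w 0).1 (w 0).2 := by
  unfold pathProb
  rw [Fin.prod_univ_one]
  have : hist w (0 : Fin 1) = (fun j => j.elim0) := by
    funext j; exact j.elim0
  rw [this]
  simp

lemma tmarg_zero (p0 : S → ℝ≥0∞) (p : S × A → S → ℝ≥0∞)
    (π : (t : ℕ) → (Fin t → S × A) → S → A → ℝ≥0∞) (s : S) (a : A) :
    tmarg p0 p π 0 s a = p0 s * π 0 (fun j => j.elim0) s a := by
  unfold tmarg
  rw [sum_fin_one]
  rw [Fintype.sum_eq_single (s, a) (fun x hx => by simp [hx])]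
  simp [pathProb_zero]

lemma tmarg_succ (p0 : S → ℝ≥0∞) (p : S × A → S → ℝ≥0∞)
    (π : (t : ℕ) → (Fin t → S × A) → S → A → ℝ≥0∞) (t : ℕ) (s : S) (a : A) :
    tmarg p0 p π (t + 1) s a
      = ∑ u : Fin (t + 1) → S × A,
          pathProb p0 p π t u * π (t + 1) u s a * p (u (Fin.last t)) s := by
  unfold tmarg
  rw [sum_snoc]
  simp only [Fin.snoc_last, pathProb_snoc]
  rw [Fintype.sum_eq_single (s, a) (fun x hx => Finset.sum_eq_zero (fun u _ => by simp [hx]))]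
  simp

/-- Marginal of the next state. -/
lemma sum_pathProb_mul (p0 : S → ℝ≥0∞) (p : S × A → S → ℝ≥0∞)
    (π : (t : ℕ) → (Fin t → S × A) → S → A → ℝ≥0∞) (t : ℕ) (s : S) :
    ∑ u : Fin (t + 1) → S × A, pathProb p0 p π t u * p (u (Fin.last t)) s
      = ∑ x : S × A, tmarg p0 p π t x.1 x.2 * p x s := by
  symm
  calc ∑ x : S × A, tmarg p0 p π t x.1 x.2 * p x s
      = ∑ x : S × A, ∑ u : Fin (t + 1) → S × A,
          (if u (Fin.last t) = x then pathProb p0 p π t u * p x s else 0) := by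
        unfold tmarg
        refine Finset.sum_congr rfl fun x _ => ?_
        rw [Finset.sum_mul]
        exact Finset.sum_congr rfl fun u _ => by simp [ite_mul]
    _ = ∑ u : Fin (t + 1) → S × A, ∑ x : S × A,
          (if u (Fin.last t) = x then pathProb p0 p π t u * p x s else 0) := Finset.sum_comm
    _ = ∑ u : Fin (t + 1) → S × A, pathProb p0 p π t u * p (u (Fin.last t)) s :=
        Finset.sum_congr rfl fun u _ => by simp

lemma smarg_succ (p0 : S → ℝ≥0∞) (p : S × A → S → ℝ≥0∞)
    (π : (t : ℕ) → (Fin t → S × A) → S → A → ℝ≥0∞)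
    (hπ : ∀ t h s, ∑ a, π t h s a = 1) (t : ℕ) (s : S) :
    smarg p0 p π (t + 1) s = ∑ x : S × A, tmarg p0 p π t x.1 x.2 * p x s := by
  rw [← sum_pathProb_mul]
  unfold smarg
  simp only [tmarg_succ]
  rw [Finset.sum_comm]
  refine Finset.sum_congr rfl fun u _ => ?_
  calc ∑ a, pathProb p0 p π t u * π (t + 1) u s a * p (u (Fin.last t)) s
      = (pathProb p0 p π t u * ∑ a, π (t + 1) u s a) * p (u (Fin.last t)) s := by
        rw [Finset.mul_sum, Finset.sum_mul]
    _ = pathProb p0 p π t u * p (u (Fin.last t)) s := by rw [hπ]; ring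

lemma smarg_zero (p0 : S → ℝ≥0∞) (p : S × A → S → ℝ≥0∞)
    (π : (t : ℕ) → (Fin t → S × A) → S → A → ℝ≥0∞)
    (hπ : ∀ t h s, ∑ a, π t h s a = 1) (s : S) :
    smarg p0 p π 0 s = p0 s := by
  unfold smarg
  simp only [tmarg_zero, ← Finset.mul_sum, hπ, mul_one]

lemma tmarg_le_smarg (p0 : S → ℝ≥0∞) (p : S × A → S → ℝ≥0∞)
    (π : (t : ℕ) → (Fin t → S × A) → S → A → ℝ≥0∞) (t : ℕ) (s : S) (a : A) :
    tmarg p0 p π t s a ≤ smarg p0 p π t s :=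
  Finset.single_le_sum (fun b _ => zero_le) (Finset.mem_univ a)

lemma sum_pathProb (p0 : S → ℝ≥0∞) (hp0 : ∑ s, p0 s = 1)
    (p : S × A → S → ℝ≥0∞) (hp : ∀ x, ∑ s', p x s' = 1)
    (π : (t : ℕ) → (Fin t → S × A) → S → A → ℝ≥0∞)
    (hπ : ∀ t h s, ∑ a, π t h s a = 1) :
    ∀ t, ∑ w : Fin (t + 1) → S × A, pathProb p0 p π t w = 1 := by
  intro t
  induction t with
  | zero =>
    rw [sum_fin_one (f := fun w => pathProb p0 p π 0 w)]
    simp only [pathProb_zero]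
    rw [Fintype.sum_prod_type]
    simp only [← Finset.mul_sum, hπ, mul_one]
    exact hp0
  | succ t ih =>
    rw [sum_snoc (f := fun w => pathProb p0 p π (t + 1) w)]
    simp only [pathProb_snoc]
    rw [Finset.sum_comm]
    calc ∑ u : Fin (t + 1) → S × A, ∑ x : S × A,
          pathProb p0 p π t u * π (t + 1) u x.1 x.2 * p (u (Fin.last t)) x.1
        = ∑ u : Fin (t + 1) → S × A, pathProb p0 p π t u := by
          refine Finset.sum_congr rfl fun u _ => ?_
          rw [Fintype.sum_prod_type]
          calc ∑ s' : S, ∑ a' : A, pathProb p0 p π t u * π (t + 1) u s' a' * p (u (Fin.last t)) s'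
              = ∑ s' : S, pathProb p0 p π t u * p (u (Fin.last t)) s' := by
                refine Finset.sum_congr rfl fun s' _ => ?_
                rw [← Finset.sum_mul, ← Finset.mul_sum, hπ, mul_one]
            _ = pathProb p0 p π t u := by rw [← Finset.mul_sum, hp, mul_one]
      _ = 1 := ih

lemma tmarg_le_one (p0 : S → ℝ≥0∞) (hp0 : ∑ s, p0 s = 1)
    (p : S × A → S → ℝ≥0∞) (hp : ∀ x, ∑ s', p x s' = 1)
    (π : (t : ℕ) → (Fin t → S × A) → S → A → ℝ≥0∞)
    (hπ : ∀ t h s, ∑ a, π t h s a = 1) (t : ℕ) (s : S) (a : A) :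
    tmarg p0 p π t s a ≤ 1 := by
  rw [← sum_pathProb p0 hp0 p hp π hπ t]
  exact Finset.sum_le_sum fun w _ => by split <;> simp

lemma occ_ne_top (γ : ℝ≥0∞) (hγ : γ < 1) (p0 : S → ℝ≥0∞) (hp0 : ∑ s, p0 s = 1)
    (p : S × A → S → ℝ≥0∞) (hp : ∀ x, ∑ s', p x s' = 1)
    (π : (t : ℕ) → (Fin t → S × A) → S → A → ℝ≥0∞)
    (hπ : ∀ t h s, ∑ a, π t h s a = 1) (s : S) (a : A) :
    occ γ p0 p π s a ≠ ⊤ := by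
  have h1 : occ γ p0 p π s a ≤ ∑' t : ℕ, γ ^ t := by
    rw [occ_eq_tsum]
    refine ENNReal.tsum_le_tsum fun t => ?_
    calc γ ^ t * tmarg p0 p π t s a ≤ γ ^ t * 1 :=
          mul_le_mul_right (tmarg_le_one p0 hp0 p hp π hπ t s a) _
      _ = γ ^ t := mul_one _
  refine ne_top_of_le_ne_top ?_ h1
  rw [ENNReal.tsum_geometric]
  exact ENNReal.inv_ne_top.2 (by simpa [tsub_eq_zero_iff_le] using hγ.not_ge)

end Aux2

section Aux3
variable {S A : Type*} [Fintype S] [Fintype A] [DecidableEq S] [DecidableEq A]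

lemma tmarg_lift (p0 : S → ℝ≥0∞) (p : S × A → S → ℝ≥0∞) (tπ : S → A → ℝ≥0∞)
    (htπ1 : ∀ s, ∑ a, tπ s a = 1) (t : ℕ) (s : S) (a : A) :
    tmarg p0 p (liftMk tπ) t s a = tπ s a * smarg p0 p (liftMk tπ) t s := by
  cases t with
  | zero =>
    rw [tmarg_zero, smarg_zero p0 p (liftMk tπ) (fun _ _ u => htπ1 u) s]
    show p0 s * tπ s a = _
    ring
  | succ t =>
    rw [tmarg_succ]
    have hs : smarg p0 p (liftMk tπ) (t + 1) s
        = ∑ u : Fin (t + 1) → S × A,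
            pathProb p0 p (liftMk tπ) t u * p (u (Fin.last t)) s := by
      rw [smarg_succ p0 p (liftMk tπ) (fun _ _ u => htπ1 u), ← sum_pathProb_mul]
    rw [hs, Finset.mul_sum]
    refine Finset.sum_congr rfl fun u _ => ?_
    show pathProb p0 p (liftMk tπ) t u * tπ s a * p (u (Fin.last t)) s = _
    ring

end Aux3


/-- The occupancy measure of `π` is absolutely continuous with respect to the
occupancy measure of its Markovian projection `π̃`. -/
theorem occupancy_absolute_continuity {S A : Type*}
    [Fintype S] [Fintype A] [DecidableEq S] [DecidableEq A]
    (γ : ℝ≥0∞) (hγ : γ < 1)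
    (p0 : S → ℝ≥0∞) (hp0 : ∑ s, p0 s = 1)
    (p : S × A → S → ℝ≥0∞) (hp : ∀ x, ∑ s', p x s' = 1)
    (π : (t : ℕ) → (Fin t → S × A) → S → A → ℝ≥0∞)
    (hπ : ∀ t h s, ∑ a, π t h s a = 1)
    (tπ : S → A → ℝ≥0∞)
    (htπ : ∀ s a, (∑ b, occ γ p0 p π s b) ≠ 0 →
      tπ s a = occ γ p0 p π s a / (∑ b, occ γ p0 p π s b))
    (htπ1 : ∀ s, ∑ a, tπ s a = 1) :
    ∀ s a, occ γ p0 p (liftMk tπ) s a = 0 → occ γ p0 p π s a = 0 := by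
  intro s a hν
  have hMne : ∀ s' : S, (∑ b, occ γ p0 p π s' b) ≠ ⊤ := fun s' =>
    (ENNReal.sum_lt_top.2 fun b _ =>
      lt_top_iff_ne_top.2 (occ_ne_top γ hγ p0 hp0 p hp π hπ s' b)).ne
  have hle : ∀ (s' : S) (a' : A), occ γ p0 p π s' a' ≤ ∑ b, occ γ p0 p π s' b := fun s' a' =>
    Finset.single_le_sum (fun b _ => zero_le) (Finset.mem_univ a')
  have hzero : ∀ s' a', tπ s' a' = 0 → occ γ p0 p π s' a' = 0 := by
    intro s' a' h0
    by_cases hM : (∑ b, occ γ p0 p π s' b) = 0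
    · exact le_antisymm (le_trans (hle s' a') hM.le) (zero_le)
    · have h := (htπ s' a' hM).symm.trans h0
      rcases ENNReal.div_eq_zero_iff.1 h with h | h
      · exact h
      · exact absurd h (hMne s')
  have key : ∀ t : ℕ, ∀ s' : S, γ ^ t * smarg p0 p (liftMk tπ) t s' = 0 →
      γ ^ t * smarg p0 p π t s' = 0 := by
    intro t
    induction t with
    | zero =>
      intro s' h
      rw [smarg_zero p0 p π hπ]
      rwa [smarg_zero p0 p (liftMk tπ) (fun _ _ u => htπ1 u)] at h
    | succ t ih =>
      intro s' h
      by_cases hγ0 : γ ^ (t + 1) = 0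
      · rw [hγ0, zero_mul]
      have hγt : γ ^ t ≠ 0 := by
        intro hz; exact hγ0 (by rw [pow_succ, hz, zero_mul])
      have hsν : smarg p0 p (liftMk tπ) (t + 1) s' = 0 := by
        rcases mul_eq_zero.1 h with h | h
        · exact absurd h hγ0
        · exact h
      rw [smarg_succ p0 p (liftMk tπ) (fun _ _ u => htπ1 u)] at hsν
      have hsπ : smarg p0 p π (t + 1) s' = 0 := by
        rw [smarg_succ p0 p π hπ]
        refine Finset.sum_eq_zero fun x hx => ?_
        have hx0 := (Finset.sum_eq_zero_iff.1 hsν) x hx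
        rw [tmarg_lift p0 p tπ htπ1] at hx0
        rcases mul_eq_zero.1 hx0 with h1 | h1
        · rcases mul_eq_zero.1 h1 with h2 | h2
          · have hocc := hzero x.1 x.2 h2
            have hle2 : γ ^ t * tmarg p0 p π t x.1 x.2 ≤ occ γ p0 p π x.1 x.2 := by
              rw [occ_eq_tsum]; exact ENNReal.le_tsum t
            have h4 : γ ^ t * tmarg p0 p π t x.1 x.2 = 0 :=
              le_antisymm (hocc ▸ hle2) (zero_le)
            rcases mul_eq_zero.1 h4 with h3 | h3
            · exact absurd h3 hγt
            · rw [h3, zero_mul]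
          · have h5 := ih x.1 (by rw [h2, mul_zero])
            rcases mul_eq_zero.1 h5 with h3 | h3
            · exact absurd h3 hγt
            · have h6 : tmarg p0 p π t x.1 x.2 = 0 :=
                le_antisymm (h3 ▸ tmarg_le_smarg p0 p π t x.1 x.2) (zero_le)
              rw [h6, zero_mul]
        · rw [h1, mul_zero]
      rw [hsπ, mul_zero]
  by_cases h0 : tπ s a = 0
  · exact hzero s a h0
  · rw [occ_eq_tsum] at hν
    have hterm := ENNReal.tsum_eq_zero.1 hν
    have hsm : ∀ t, γ ^ t * smarg p0 p (liftMk tπ) t s = 0 := by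
      intro t
      have ht := hterm t
      rw [tmarg_lift p0 p tπ htπ1] at ht
      rcases mul_eq_zero.1 ht with h | h
      · rw [h, zero_mul]
      · rcases mul_eq_zero.1 h with h | h
        · exact absurd h h0
        · rw [h, mul_zero]
    rw [occ_eq_tsum, ENNReal.tsum_eq_zero]
    intro t
    have hk := key t s (hsm t)
    have h2 : γ ^ t * tmarg p0 p π t s a ≤ γ ^ t * smarg p0 p π t s :=
      mul_le_mul_right (tmarg_le_smarg p0 p π t s a) _
    exact le_antisymm (hk ▸ h2) (zero_le)
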